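/- For every x, y ∈ ℝ^n, ‖(x + y)⁺‖₂² ≤ ‖x⁺‖₂² + 2⟨x⁺, y⟩ + ‖y‖₂². -/

import Mathlib

open RealInnerProductSpace

/-! Coordinatewise `(a + b)⁺ ≤ |a⁺ + b|`, so `‖(x + y)⁺‖ ≤ ‖x⁺ + y‖`; expanding the square
of the right-hand side gives the inequality. -/

/-- Componentwise positive part (ReLU) on `ℝ^n`. -/
noncomputable def posPart18 {n : ℕ} (x : EuclideanSpace ℝ (Fin n)) :
    EuclideanSpace ℝ (Fin n) := WithLp.toLp 2 (fun i => max (x i) 0)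

theorem EuclideanSpace.norm_le_norm_of_forall_norm_apply_le {𝕜 ι : Type*} [RCLike 𝕜]
    [Fintype ι] {v w : EuclideanSpace 𝕜 ι} (h : ∀ i, ‖v i‖ ≤ ‖w i‖) : ‖v‖ ≤ ‖w‖ := by
  have hsq : ‖v‖ ^ 2 ≤ ‖w‖ ^ 2 := by
    rw [EuclideanSpace.norm_sq_eq, EuclideanSpace.norm_sq_eq]
    exact Finset.sum_le_sum fun i _ => pow_le_pow_left₀ (norm_nonneg _) (h i) 2
  exact (sq_le_sq₀ (norm_nonneg _) (norm_nonneg _)).1 hsq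

theorem Real.norm_max_add_zero_le (a b : ℝ) : ‖max (a + b) 0‖ ≤ ‖max a 0 + b‖ := by
  rw [Real.norm_eq_abs, abs_of_nonneg (le_max_right _ _)]
  have hab : a + b ≤ max a 0 + b := by gcongr; exact le_max_left _ _
  exact max_le (hab.trans (le_abs_self _)) (abs_nonneg _)

theorem norm_posPart18_add_le {n : ℕ} (x y : EuclideanSpace ℝ (Fin n)) :
    ‖posPart18 (x + y)‖ ≤ ‖posPart18 x + y‖ :=
  EuclideanSpace.norm_le_norm_of_forall_norm_apply_le fun i =>
    Real.norm_max_add_zero_le (x i) (y i)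

/-- Positive invariance and smoothness of `F x = ‖x⁺‖₂²` with `L = 2`:
`‖(x+y)⁺‖₂² ≤ ‖x⁺‖₂² + 2⟪x⁺, y⟫ + ‖y‖₂²`. -/
theorem stmt_18 {n : ℕ} (x y : EuclideanSpace ℝ (Fin n)) :
    ‖posPart18 (x + y)‖ ^ 2
      ≤ ‖posPart18 x‖ ^ 2 + 2 * ⟪posPart18 x, y⟫ + ‖y‖ ^ 2 := by
  calc ‖posPart18 (x + y)‖ ^ 2 ≤ ‖posPart18 x + y‖ ^ 2 := by
        gcongr; exact norm_posPart18_add_le x y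
    _ = ‖posPart18 x‖ ^ 2 + 2 * ⟪posPart18 x, y⟫ + ‖y‖ ^ 2 := norm_add_sq_real _ _
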